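/- Let {p_θ}_{θ∈Θ} be a one-parameter canonical exponential family p_θ(x) = exp(θx − A(θ)) with respect to a measure η on ℝ, and let X̄_1 and X̄_j denote the empirical means of τ i.i.d. samples from p_{θ_1} and p_{θ_j} respectively (so X̄_θ has density q_{τθ}(x) = exp(τθx − τA(θ)) with respect to a measure η_τ). Fix c > 0, let K_j(x) = (1/c)·e^{τ(θ_1−θ_j)x}·1{e^{τ(θ_1−θ_j)x} ≤ c}, let ξ be uniform on [0,1] independent of everything else, and let E_j = {ξ ≤ K_j(X̄_j)}. Then: (1) the conditional law of X̄_j given E_j equals the law of X̄_1 conditioned on the event {e^{τ(θ_1−θ_j)X̄_1} ≤ c}; (2) TV( law(X̄_1), law(X̄_j | E_j) ) = Pr( e^{τ(θ_1−θ_j)X̄_1} > c ); and (3) Pr(E_j) = (1/c)·(1 − Pr(e^{τ(θ_1−θ_j)X̄_1} > c))·e^{τ(A(θ_1) − A(θ_j))}. -/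
import Mathlib



open MeasureTheory ProbabilityTheory
open scoped ENNReal

noncomputable section

open scoped Classical in
/-- The Kullback–Leibler divergence between two measures: `∫ log (dμ/dν) dμ` when `μ ≪ ν`,
and `⊤` otherwise. -/
def KLdiv {Ω : Type*} [MeasurableSpace Ω] (μ ν : Measure Ω) : ℝ≥0∞ :=
  if μ ≪ ν then ENNReal.ofReal (∫ x, Real.log ((μ.rnDeriv ν x).toReal) ∂μ) else ⊤

/-- Real-valued Kullback–Leibler divergence. -/
def KLreal {Ω : Type*} [MeasurableSpace Ω] (μ ν : Measure Ω) : ℝ := (KLdiv μ ν).toReal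

/-- Total variation distance between two measures: `sup_{A measurable} |P(A) − Q(A)|`. -/
def tvDist {Ω : Type*} [MeasurableSpace Ω] (P Q : Measure Ω) : ℝ :=
  ⨆ A : {s : Set Ω // MeasurableSet s}, |(P A).toReal - (Q A).toReal|

/-- The member of the canonical one-parameter exponential family with natural parameter `θ`,
log-partition function `Afn` and reference measure `ηm`:
`p_θ(x) = exp (θ x − A(θ))` with respect to `ηm`. -/
def expFam (ηm : Measure ℝ) (Afn : ℝ → ℝ) (θ : ℝ) : Measure ℝ :=
  ηm.withDensity fun x => ENNReal.ofReal (Real.exp (θ * x - Afn θ))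

/-- The law of the empirical mean of `τ` i.i.d. samples from `p_θ`: it has density
`q_{τθ}(x) = exp (τ θ x − τ A(θ))` with respect to a measure `ητ` (depending only on the
reference measure and `τ`). -/
def empLaw (ητ : Measure ℝ) (Afn : ℝ → ℝ) (τ : ℕ) (θ : ℝ) : Measure ℝ :=
  ητ.withDensity fun x => ENNReal.ofReal (Real.exp ((τ : ℝ) * θ * x - (τ : ℝ) * Afn θ))

lemma key_prod (ητ : Measure ℝ) (Afn : ℝ → ℝ) (τ : ℕ) (θ1 θj c : ℝ) (hc : 0 < c)
    (A : Set ℝ) (hA : MeasurableSet A) :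
    ((empLaw ητ Afn τ θj).prod (volume.restrict (Set.Icc (0:ℝ) 1)))
      (Prod.fst ⁻¹' A ∩ {p : ℝ × ℝ | p.2 ≤ (if Real.exp ((τ : ℝ) * (θ1 - θj) * p.1) ≤ c
        then Real.exp ((τ : ℝ) * (θ1 - θj) * p.1) / c else 0)}) =
    ENNReal.ofReal ((1/c) * Real.exp ((τ:ℝ) * (Afn θ1 - Afn θj))) *
      (empLaw ητ Afn τ θ1) (A ∩ {x : ℝ | Real.exp ((τ:ℝ)*(θ1-θj)*x) ≤ c}) := by
  classical
  set a : ℝ := (τ : ℝ) * (θ1 - θj) with ha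
  set S : Set ℝ := {x : ℝ | Real.exp (a * x) ≤ c} with hSdef
  have hS : MeasurableSet S :=
    measurableSet_le (by fun_prop) measurable_const
  set g : ℝ → ℝ := fun x => if Real.exp (a * x) ≤ c then Real.exp (a * x) / c else 0 with hg
  have hgmeas : Measurable g := Measurable.ite hS (by fun_prop) measurable_const
  have hg0 : ∀ x, 0 ≤ g x := by
    intro x; simp only [hg]
    split <;> positivity
  have hg1 : ∀ x, g x ≤ 1 := by
    intro x; simp only [hg]
    split
    · rw [div_le_one hc]; assumption
    · norm_num
  have hmEj : MeasurableSet {p : ℝ × ℝ | p.2 ≤ g p.1} :=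
    measurableSet_le measurable_snd (hgmeas.comp measurable_fst)
  have hmset : MeasurableSet (Prod.fst ⁻¹' A ∩ {p : ℝ × ℝ | p.2 ≤ g p.1}) :=
    (hA.preimage measurable_fst).inter hmEj
  rw [Measure.prod_apply hmset]
  have hslice : ∀ x : ℝ,
      (volume.restrict (Set.Icc (0:ℝ) 1))
        (Prod.mk x ⁻¹' (Prod.fst ⁻¹' A ∩ {p : ℝ × ℝ | p.2 ≤ g p.1})) =
      Set.indicator A (fun x => ENNReal.ofReal (g x)) x := by
    intro x
    by_cases hx : x ∈ A
    · have : Prod.mk x ⁻¹' (Prod.fst ⁻¹' A ∩ {p : ℝ × ℝ | p.2 ≤ g p.1}) = Set.Iic (g x) := by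
        ext ξ; simp [hx, Set.mem_Iic]
      rw [this, Measure.restrict_apply measurableSet_Iic]
      have : Set.Iic (g x) ∩ Set.Icc (0:ℝ) 1 = Set.Icc 0 (g x) := by
        ext ξ
        simp only [Set.mem_inter_iff, Set.mem_Iic, Set.mem_Icc]
        constructor
        · rintro ⟨h1, h2, h3⟩; exact ⟨h2, h1⟩
        · rintro ⟨h1, h2⟩; exact ⟨h2, h1, h2.trans (hg1 x)⟩
      rw [this, Real.volume_Icc, Set.indicator_of_mem hx]
      norm_num
    · have : Prod.mk x ⁻¹' (Prod.fst ⁻¹' A ∩ {p : ℝ × ℝ | p.2 ≤ g p.1}) = ∅ := by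
        ext ξ; simp [hx]
      rw [this, Set.indicator_of_notMem hx]
      simp
  simp_rw [hslice]
  rw [lintegral_indicator hA]
  unfold empLaw
  rw [restrict_withDensity hA _, lintegral_withDensity_eq_lintegral_mul _ (by fun_prop)
    (by fun_prop)]
  have hpt : ∀ x : ℝ,
      ((fun x => ENNReal.ofReal (Real.exp ((τ : ℝ) * θj * x - (τ : ℝ) * Afn θj))) *
        fun x => ENNReal.ofReal (g x)) x =
      Set.indicator S (fun x => ENNReal.ofReal ((1/c) * Real.exp ((τ:ℝ) * (Afn θ1 - Afn θj)) *
        Real.exp ((τ : ℝ) * θ1 * x - (τ : ℝ) * Afn θ1))) x := by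
    intro x
    by_cases hx : x ∈ S
    · rw [Set.indicator_of_mem hx]
      have hxS : Real.exp (a * x) ≤ c := hx
      simp only [Pi.mul_apply, hg, if_pos hxS]
      rw [← ENNReal.ofReal_mul (by positivity)]
      congr 1
      have h2 : Real.exp ((τ:ℝ)*(Afn θ1 - Afn θj)) * Real.exp ((τ:ℝ)*θ1*x - (τ:ℝ)*Afn θ1)
          = Real.exp ((τ:ℝ)*θj*x - (τ:ℝ)*Afn θj) * Real.exp (a*x) := by
        rw [← Real.exp_add, ← Real.exp_add, ha]; ring_nf
      linear_combination -c⁻¹ * h2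
    · rw [Set.indicator_of_notMem hx]
      have hxS : ¬ Real.exp (a * x) ≤ c := hx
      simp [Pi.mul_apply, hg, if_neg hxS]
  simp_rw [hpt]
  rw [lintegral_indicator hS, Measure.restrict_restrict hS]
  simp_rw [ENNReal.ofReal_mul (by positivity : (0:ℝ) ≤ (1/c) * Real.exp ((τ:ℝ) * (Afn θ1 - Afn θj)))]
  rw [lintegral_const_mul _ (by fun_prop)]
  rw [Set.inter_comm A S, withDensity_apply _ (hS.inter hA)]

/-- **Censored tilting (Lemma 15).**  Let `X̄_1, X̄_j` be the empirical means of `τ` i.i.d.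
samples from `p_{θ_1}`, `p_{θ_j}`, let `ξ` be an independent uniform variable on `[0,1]`,
`K_j(x) = (1/c) e^{τ(θ_1−θ_j)x} 1{e^{τ(θ_1−θ_j)x} ≤ c}` and `E_j = {ξ ≤ K_j(X̄_j)}`.  Then
(1) the conditional law of `X̄_j` given `E_j` is the law of `X̄_1` conditioned on
`{e^{τ(θ_1−θ_j) X̄_1} ≤ c}`; (2) `TV(law X̄_1, law (X̄_j | E_j)) = Pr(e^{τ(θ_1−θ_j)X̄_1} > c)`;
and (3) `Pr(E_j) = (1/c)(1 − Pr(e^{τ(θ_1−θ_j)X̄_1} > c)) e^{τ(A(θ_1) − A(θ_j))}`. -/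
theorem censored_tilting
    (ηm ητ : Measure ℝ) (Afn : ℝ → ℝ) (τ : ℕ) (θ1 θj : ℝ)
    (hprob1 : IsProbabilityMeasure (empLaw ητ Afn τ θ1))
    (hprobj : IsProbabilityMeasure (empLaw ητ Afn τ θj))
    (c : ℝ) (hc : 0 < c)
    (P : Measure (ℝ × ℝ))
    (hP : P = (empLaw ητ Afn τ θj).prod (volume.restrict (Set.Icc (0:ℝ) 1)))
    (Ej : Set (ℝ × ℝ))
    (hEj : Ej = {p : ℝ × ℝ | p.2 ≤ (if Real.exp ((τ : ℝ) * (θ1 - θj) * p.1) ≤ c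
        then Real.exp ((τ : ℝ) * (θ1 - θj) * p.1) / c else 0)}) :
    Measure.map Prod.fst (P[|Ej]) =
        (empLaw ητ Afn τ θ1)[|{x : ℝ | Real.exp ((τ : ℝ) * (θ1 - θj) * x) ≤ c}] ∧
    tvDist (empLaw ητ Afn τ θ1) (Measure.map Prod.fst (P[|Ej])) =
        ((empLaw ητ Afn τ θ1) {x : ℝ | c < Real.exp ((τ : ℝ) * (θ1 - θj) * x)}).toReal ∧
    (P Ej).toReal =
        (1 / c) *
          (1 - ((empLaw ητ Afn τ θ1) {x : ℝ | c < Real.exp ((τ : ℝ) * (θ1 - θj) * x)}).toReal) *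
          Real.exp ((τ : ℝ) * (Afn θ1 - Afn θj)) := by
  classical
  subst hP hEj
  set μ1 : Measure ℝ := empLaw ητ Afn τ θ1 with hμ1
  set a : ℝ := (τ : ℝ) * (θ1 - θj) with ha
  set S : Set ℝ := {x : ℝ | Real.exp (a * x) ≤ c} with hSdef
  have hS : MeasurableSet S := measurableSet_le (by fun_prop) measurable_const
  have hScompl : {x : ℝ | c < Real.exp (a * x)} = Sᶜ := by
    ext x; simp [hSdef, not_le]
  set g : ℝ → ℝ := fun x => if Real.exp (a * x) ≤ c then Real.exp (a * x) / c else 0 with hg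
  have hgmeas : Measurable g := Measurable.ite hS (by fun_prop) measurable_const
  have hmEj : MeasurableSet {p : ℝ × ℝ | p.2 ≤ g p.1} :=
    measurableSet_le measurable_snd (hgmeas.comp measurable_fst)
  set k : ℝ≥0∞ := ENNReal.ofReal ((1/c) * Real.exp ((τ:ℝ) * (Afn θ1 - Afn θj))) with hk
  have hk0 : k ≠ 0 := by
    rw [hk]; simp only [ne_eq, ENNReal.ofReal_eq_zero, not_le]; positivity
  have hkfin : k ≠ ⊤ := ENNReal.ofReal_ne_top
  have key : ∀ A : Set ℝ, MeasurableSet A →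
      ((empLaw ητ Afn τ θj).prod (volume.restrict (Set.Icc (0:ℝ) 1)))
        (Prod.fst ⁻¹' A ∩ {p : ℝ × ℝ | p.2 ≤ g p.1}) = k * μ1 (A ∩ S) :=
    fun A hA => key_prod ητ Afn τ θ1 θj c hc A hA
  have hPEj : ((empLaw ητ Afn τ θj).prod (volume.restrict (Set.Icc (0:ℝ) 1)))
      {p : ℝ × ℝ | p.2 ≤ g p.1} = k * μ1 S := by
    have := key Set.univ MeasurableSet.univ
    simpa using this
  -- Part (1)
  have part1 : Measure.map Prod.fst
      (((empLaw ητ Afn τ θj).prod (volume.restrict (Set.Icc (0:ℝ) 1)))[|{p : ℝ × ℝ | p.2 ≤ g p.1}])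
      = μ1[|S] := by
    refine Measure.ext fun t ht => ?_
    rw [Measure.map_apply measurable_fst ht, cond_apply hmEj, cond_apply hS,
      Set.inter_comm {p : ℝ × ℝ | p.2 ≤ g p.1} (Prod.fst ⁻¹' t), key t ht, hPEj,
      Set.inter_comm S t, ENNReal.mul_inv (Or.inl hk0) (Or.inl hkfin),
      mul_mul_mul_comm, ENNReal.inv_mul_cancel hk0 hkfin, one_mul]
  refine ⟨part1, ?_, ?_⟩
  -- Part (2)
  · rw [part1, hScompl]
    set q : ℝ := (μ1 Sᶜ).toReal with hq
    have hq0 : 0 ≤ q := ENNReal.toReal_nonneg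
    have hsum : (μ1 S).toReal + q = 1 := by
      rw [hq, ← ENNReal.toReal_add (measure_ne_top _ _) (measure_ne_top _ _),
        measure_add_measure_compl hS, measure_univ]
      simp
    have bound : ∀ A : {s : Set ℝ // MeasurableSet s},
        |(μ1 A).toReal - ((μ1[|S]) A).toReal| ≤ q := by
      rintro ⟨A, hA⟩
      by_cases hz : μ1 S = 0
      · have hcz : μ1[|S] = 0 := cond_eq_zero_of_meas_eq_zero hz
        have hq1 : q = 1 := by
          have : (μ1 S).toReal = 0 := by rw [hz]; simp
          linarith
        rw [hcz]
        simp only [Measure.coe_zero, Pi.zero_apply, ENNReal.toReal_zero, sub_zero]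
        rw [abs_of_nonneg ENNReal.toReal_nonneg, hq1]
        have : μ1 A ≤ 1 := prob_le_one
        exact_mod_cast ENNReal.toReal_le_toReal (measure_ne_top _ _) (by simp) |>.mpr this
      · set p : ℝ := (μ1 S).toReal with hp
        have hppos : 0 < p := ENNReal.toReal_pos hz (measure_ne_top _ _)
        set x : ℝ := (μ1 (A ∩ S)).toReal with hx
        set b : ℝ := (μ1 (A ∩ Sᶜ)).toReal with hb
        have hx0 : 0 ≤ x := ENNReal.toReal_nonneg
        have hb0 : 0 ≤ b := ENNReal.toReal_nonneg
        have hxp : x ≤ p := ENNReal.toReal_mono (measure_ne_top _ _)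
          (measure_mono Set.inter_subset_right)
        have hbq : b ≤ q := ENNReal.toReal_mono (measure_ne_top _ _)
          (measure_mono Set.inter_subset_right)
        have hsplit : (μ1 A).toReal = x + b := by
          rw [hx, hb, ← ENNReal.toReal_add (measure_ne_top _ _) (measure_ne_top _ _)]
          congr 1
          have h := measure_inter_add_diff (μ := μ1) A hS
          rw [Set.diff_eq] at h
          exact h.symm
        have hcondval : ((μ1[|S]) A).toReal = p⁻¹ * x := by
          rw [cond_apply hS, Set.inter_comm S A, ENNReal.toReal_mul, ENNReal.toReal_inv]
        rw [hsplit, hcondval]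
        set d : ℝ := p⁻¹ * x with hd
        have hd0 : 0 ≤ d := by positivity
        have hd1 : d ≤ 1 := by
          rw [hd, ← div_eq_inv_mul, div_le_one hppos]; exact hxp
        have hxd : x = d * p := by
          rw [hd]; field_simp
        rw [abs_le]
        constructor
        · nlinarith [mul_nonneg (sub_nonneg.2 hd1) hq0]
        · nlinarith [mul_nonneg hd0 hq0]
    have hattain : |(μ1 Sᶜ).toReal - ((μ1[|S]) Sᶜ).toReal| = q := by
      rw [cond_apply hS, Set.inter_compl_self, measure_empty, mul_zero]
      simp [hq, abs_of_nonneg ENNReal.toReal_nonneg]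
    refine le_antisymm (ciSup_le bound) ?_
    have hbdd : BddAbove (Set.range fun A : {s : Set ℝ // MeasurableSet s} =>
        |(μ1 A).toReal - ((μ1[|S]) A).toReal|) := ⟨q, by rintro _ ⟨A, rfl⟩; exact bound A⟩
    calc q = |(μ1 Sᶜ).toReal - ((μ1[|S]) Sᶜ).toReal| := hattain.symm
      _ ≤ _ := le_ciSup hbdd ⟨Sᶜ, hS.compl⟩
  -- Part (3)
  · rw [hPEj, hScompl, ENNReal.toReal_mul, hk,
      ENNReal.toReal_ofReal (by positivity)]
    have hsum : (μ1 S).toReal + (μ1 Sᶜ).toReal = 1 := by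
      rw [← ENNReal.toReal_add (measure_ne_top _ _) (measure_ne_top _ _),
        measure_add_measure_compl hS, measure_univ]
      simp
    have : (μ1 S).toReal = 1 - (μ1 Sᶜ).toReal := by linarith
    rw [this]; ring


end
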